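/- Consider an SRLK steady-state branch with no allostery, i.e. K_i = K_i' for all i = 1, …, n, and let N° = min(N_1, …, N_n). Let z̄ = (−1 + K_0·(N_z − N_1) + √((1 + K_0·(N_1 − N_z))² + 4·K_0·N_z))/(2·K_0). Then lim_{L→+∞} σ(L) = (K_0·z̄/(1 + K_0·z̄))·N° and lim_{L→+∞} δ(L) = N°/(1 + K_0·z̄). -/

import Mathlib

/-! SRLK model with `n+1` trans-membrane chains `X_1, …, X_{n+1}` (indexed by
`Fin (n+1)`, so the paper's "`n ≥ 1` chains" corresponds to `n+1` here), an extrinsic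
kinase `Z` with affinity `K0`, signalling affinities `K i`, dummy affinities `K' i`,
and total copy numbers `Nz` and `N i`. -/

/-- The signalling function `σ = K0·z·L·Π_j (K_j·x_j)`. -/
def srlkSigma (n : ℕ) (K0 : ℝ) (K : Fin (n+1) → ℝ) (z L : ℝ)
    (x : Fin (n+1) → ℝ) : ℝ :=
  K0 * z * L * ∏ j, (K j * x j)

/-- The dummy function `δ = L·Π_j (K'_j·x_j)`. -/
def srlkDelta (n : ℕ) (K' : Fin (n+1) → ℝ) (L : ℝ) (x : Fin (n+1) → ℝ) : ℝ :=
  L * ∏ j, (K' j * x j)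

/-- The SRLK steady-state equations at ligand concentration `L`. -/
def srlkSteady (n : ℕ) (K0 : ℝ) (K K' : Fin (n+1) → ℝ) (Nz : ℝ)
    (N : Fin (n+1) → ℝ) (L z : ℝ) (x : Fin (n+1) → ℝ) : Prop :=
  Nz = z + K0 * z * (x 0 + ∑ j ∈ Finset.Ioi (0 : Fin (n+1)),
      (∏ l ∈ Finset.Iio j, (K l * x l)) * x j) + srlkSigma n K0 K z L x ∧
  N 0 = x 0 + (∑ j ∈ Finset.Ioi (0 : Fin (n+1)),
        (∏ l ∈ Finset.Iio j, (K' l * x l)) * x j)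
      + srlkDelta n K' L x
      + K0 * z * (x 0 + ∑ j ∈ Finset.Ioi (0 : Fin (n+1)),
        (∏ l ∈ Finset.Iio j, (K l * x l)) * x j)
      + srlkSigma n K0 K z L x ∧
  ∀ i : Fin (n+1), 0 < i →
    N i = x i + (∑ j ∈ Finset.Ici i,
        ((∏ l ∈ Finset.Iio j, (K' l * x l)) * x j
          + K0 * z * (∏ l ∈ Finset.Iio j, (K l * x l)) * x j))
      + srlkDelta n K' L x + srlkSigma n K0 K z L x

/-- `f` is an algebraic function on `(0, ∞)`: it satisfies a monic polynomial equation
whose coefficients are rational functions with denominators nowhere vanishing on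
`(0, ∞)`. -/
def AlgebraicOnIoi (f : ℝ → ℝ) : Prop :=
  ∃ m : ℕ, 1 ≤ m ∧ ∃ p q : Fin m → Polynomial ℝ,
    (∀ i : Fin m, ∀ L : ℝ, 0 < L → (q i).eval L ≠ 0) ∧
    ∀ L : ℝ, 0 < L →
      f L ^ m + ∑ i : Fin m, ((p i).eval L / (q i).eval L) * f L ^ (i : ℕ) = 0

/-- An SRLK steady-state branch: continuous positive functions `z, x_1, …, x_{n+1}` on
`(0, ∞)` satisfying the SRLK steady-state equations for every `L > 0`, with
`z`, each `x_i`, `σ` and `δ` bounded and algebraic on `(0, ∞)`. -/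
structure SRLKBranch (n : ℕ) (K0 : ℝ) (K K' : Fin (n+1) → ℝ) (Nz : ℝ)
    (N : Fin (n+1) → ℝ) (z : ℝ → ℝ) (x : Fin (n+1) → ℝ → ℝ) : Prop where
  contZ : ContinuousOn z (Set.Ioi 0)
  contX : ∀ i, ContinuousOn (x i) (Set.Ioi 0)
  posZ : ∀ L : ℝ, 0 < L → 0 < z L
  posX : ∀ i, ∀ L : ℝ, 0 < L → 0 < x i L
  steady : ∀ L : ℝ, 0 < L → srlkSteady n K0 K K' Nz N L (z L) (fun i => x i L)
  bddZ : ∃ C : ℝ, ∀ L : ℝ, 0 < L → |z L| ≤ C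
  bddX : ∀ i, ∃ C : ℝ, ∀ L : ℝ, 0 < L → |x i L| ≤ C
  bddSigma : ∃ C : ℝ, ∀ L : ℝ, 0 < L →
    |srlkSigma n K0 K (z L) L (fun i => x i L)| ≤ C
  bddDelta : ∃ C : ℝ, ∀ L : ℝ, 0 < L → |srlkDelta n K' L (fun i => x i L)| ≤ C
  algZ : AlgebraicOnIoi z
  algX : ∀ i, AlgebraicOnIoi (x i)
  algSigma : AlgebraicOnIoi (fun L => srlkSigma n K0 K (z L) L (fun i => x i L))
  algDelta : AlgebraicOnIoi (fun L => srlkDelta n K' L (fun i => x i L))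

/-!
A bounded continuous function on `(0, ∞)` satisfying a monic polynomial equation with rational
coefficients converges at `+∞`: the equation leaves only finitely many values that can be taken
at arbitrarily large `L`, while by the intermediate value theorem every value strictly between
`liminf` and `limsup` is such a value. So `z`, the `x_i` and `δ` have limits `z̄`, `x̄_i`, `d`.
Without allostery `σ = K0·z·δ`, and the steady-state equations, rewritten in terms of `z`, `x`
and `δ` alone, pass to the limit. Since `δ = L·∏ K_j x_j` stays bounded, some `x̄_k` vanishes;
then `N_k = (1 + K0·z̄)·d`, while every `N_i` is at least this, so `N° = (1 + K0·z̄)·d`.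
Finally the equations for `N_z` and `N_1` give `K0·z̄² + (1 + K0·(N_1 - N_z))·z̄ - N_z = 0`,
whose nonnegative root is the stated `z̄`.
-/

open Filter Topology Polynomial

theorem Polynomial.eval_clearDenominators {m : ℕ} (p q : Fin m → ℝ[X]) (y L : ℝ)
    (hq : ∀ i, (q i).eval L ≠ 0) :
    (C (y ^ m) * ∏ i, q i
        + ∑ i : Fin m, C (y ^ (i : ℕ)) * (p i * ∏ j ∈ Finset.univ.erase i, q j)).eval L
      = (∏ i, (q i).eval L) * (y ^ m + ∑ i, (p i).eval L / (q i).eval L * y ^ (i : ℕ)) := by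
  simp only [eval_add, eval_mul, eval_C, eval_prod, eval_finsetSum, mul_add, Finset.mul_sum]
  congr 1
  · ring
  refine Finset.sum_congr rfl fun i _ => ?_
  rw [← Finset.mul_prod_erase _ _ (Finset.mem_univ i)]
  field_simp [hq i]

theorem AlgebraicOnIoi.finite_setOf_frequently_eq {f : ℝ → ℝ} (hf : AlgebraicOnIoi f) :
    {y | ∃ᶠ L in atTop, f L = y}.Finite := by
  obtain ⟨m, -, p, q, hq, hfpq⟩ := hf
  -- the equation of `f` at `L = 1`, which every such `y` has to satisfy
  set G : ℝ[X] := X ^ m + ∑ i : Fin m, C ((p i).eval 1 / (q i).eval 1) * X ^ (i : ℕ)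
  have hG : G ≠ 0 := (monic_X_pow_add (degree_sum_fin_lt _)).ne_zero
  refine (finite_setOfPred_isRoot hG).subset fun y hy => ?_
  set P : ℝ[X] := C (y ^ m) * ∏ i, q i
    + ∑ i : Fin m, C (y ^ (i : ℕ)) * (p i * ∏ j ∈ Finset.univ.erase i, q j)
  have hP : P = 0 := by
    by_contra hP
    refine hy ?_
    filter_upwards [eventually_atTop_not_isRoot P hP, eventually_gt_atTop 0] with L hL hL0 hfL
    refine hL ?_
    rw [IsRoot, eval_clearDenominators p q y L fun i => hq i L hL0, ← hfL, hfpq L hL0, mul_zero]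
  have h1 := congrArg (eval 1) hP
  rw [eval_clearDenominators p q y 1 fun i => hq i 1 one_pos, eval_zero] at h1
  have hq1 : ∏ i, (q i).eval 1 ≠ 0 := Finset.prod_ne_zero_iff.2 fun i _ => hq i 1 one_pos
  simpa [G, eval_finsetSum, hq1] using h1

theorem frequently_eq_of_liminf_lt_of_lt_limsup {f : ℝ → ℝ} {a y : ℝ}
    (hf : ContinuousOn f (Set.Ioi a)) (hle : IsBoundedUnder (· ≤ ·) atTop f)
    (hge : IsBoundedUnder (· ≥ ·) atTop f) (hy₁ : liminf f atTop < y)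
    (hy₂ : y < limsup f atTop) : ∃ᶠ L in atTop, f L = y := by
  refine frequently_atTop.2 fun M => ?_
  set M' := max M (a + 1)
  obtain ⟨L₁, hL₁, hf₁⟩ :=
    frequently_atTop.1 (frequently_lt_of_liminf_lt hle.isCoboundedUnder_ge hy₁) M'
  obtain ⟨L₂, hL₂, hf₂⟩ :=
    frequently_atTop.1 (frequently_lt_of_lt_limsup hge.isCoboundedUnder_le hy₂) M'
  have hsub : Set.uIcc L₁ L₂ ⊆ Set.Ici M' := Set.ordConnected_Ici.uIcc_subset hL₁ hL₂
  have hM' : Set.Ici M' ⊆ Set.Ioi a := fun L hL => by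
    simp only [Set.mem_Ici, Set.mem_Ioi, M'] at hL ⊢; linarith [le_max_right M (a + 1)]
  obtain ⟨L, hL, rfl⟩ := intermediate_value_uIcc (hf.mono (hsub.trans hM'))
    (Set.Icc_subset_uIcc ⟨hf₁.le, hf₂.le⟩)
  exact ⟨L, (le_max_left _ _).trans (hsub hL), rfl⟩

theorem exists_tendsto_of_finite_setOf_frequently_eq {f : ℝ → ℝ} {a : ℝ}
    (hf : ContinuousOn f (Set.Ioi a)) (hb : IsBoundedUnder (· ≤ ·) atTop fun L => |f L|)
    (hfin : {y | ∃ᶠ L in atTop, f L = y}.Finite) : ∃ c, Tendsto f atTop (𝓝 c) := by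
  obtain ⟨hle, hge⟩ := isBoundedUnder_le_abs.1 hb
  obtain h | h := (liminf_le_limsup hle hge).eq_or_lt
  · exact ⟨_, tendsto_of_liminf_eq_limsup h rfl hle hge⟩
  · exact absurd (hfin.subset fun y hy =>
      frequently_eq_of_liminf_lt_of_lt_limsup hf hle hge hy.1 hy.2) (Set.Ioo_infinite h)

theorem AlgebraicOnIoi.exists_tendsto {f : ℝ → ℝ} (hf : AlgebraicOnIoi f)
    (hc : ContinuousOn f (Set.Ioi 0)) (hb : ∃ C, ∀ L, 0 < L → |f L| ≤ C) :
    ∃ c, Tendsto f atTop (𝓝 c) := by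
  obtain ⟨C, hC⟩ := hb
  exact exists_tendsto_of_finite_setOf_frequently_eq hc
    (isBoundedUnder_of_eventually_le ((eventually_gt_atTop 0).mono hC))
    hf.finite_setOf_frequently_eq

theorem eq_zero_of_tendsto_of_tendsto_id_mul {g : ℝ → ℝ} {c d : ℝ}
    (hg : Tendsto g atTop (𝓝 c)) (h : Tendsto (fun L => L * g L) atTop (𝓝 d)) : c = 0 := by
  have h0 : Tendsto (fun L => L⁻¹ * (L * g L)) atTop (𝓝 (0 * d)) :=
    tendsto_inv_atTop_zero.mul h
  rw [zero_mul] at h0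
  refine tendsto_nhds_unique hg (h0.congr' ?_)
  filter_upwards [eventually_ne_atTop 0] with L hL
  field_simp

theorem eq_quadratic_root_of_nonneg {a b c x : ℝ} (ha : 0 < a) (hc : 0 < c) (hx : 0 ≤ x)
    (h : a * x ^ 2 + b * x - c = 0) : x = (-b + √(b ^ 2 + 4 * a * c)) / (2 * a) := by
  have hD : 0 ≤ b ^ 2 + 4 * a * c := by positivity
  have hdiscrim : discrim a b (-c) = √(b ^ 2 + 4 * a * c) * √(b ^ 2 + 4 * a * c) := by
    rw [Real.mul_self_sqrt hD, discrim]; ring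
  have hb : -b < √(b ^ 2 + 4 * a * c) :=
    (neg_le_abs b).trans_lt <| (Real.lt_sqrt (abs_nonneg b)).2 <| by
      rw [sq_abs]; exact lt_add_of_pos_right _ (by positivity)
  refine ((quadratic_eq_zero_iff ha.ne' hdiscrim x).1 (by linear_combination h)).resolve_right ?_
  rintro rfl
  have : (-b - √(b ^ 2 + 4 * a * c)) / (2 * a) < 0 :=
    div_neg_of_neg_of_pos (by linarith) (by positivity)
  linarith

section Model

variable {n : ℕ} {K0 : ℝ} {K : Fin (n+1) → ℝ} {Nz : ℝ} {N : Fin (n+1) → ℝ}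

/-- The concentration of the kinase-free partial complexes `X_1 ⋯ X_{j+1}`, `j ≥ i`. -/
def srlkChainSum (n : ℕ) (K x : Fin (n+1) → ℝ) (i : Fin (n+1)) : ℝ :=
  ∑ j ∈ Finset.Ici i, (∏ l ∈ Finset.Iio j, K l * x l) * x j

/-- The steady-state equations without allostery, where `σ = K0·z·δ` and `δ` is replaced by a
free variable `d`: unlike `srlkSteady`, they pass to the limit `L → ∞`. -/
def SRLKReducedSteady (n : ℕ) (K0 : ℝ) (K : Fin (n+1) → ℝ) (Nz : ℝ)
    (N : Fin (n+1) → ℝ) (z d : ℝ) (x : Fin (n+1) → ℝ) : Prop :=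
  Nz = z + K0 * z * (srlkChainSum n K x 0 + d) ∧
  N 0 = (1 + K0 * z) * (srlkChainSum n K x 0 + d) ∧
  ∀ i : Fin (n+1), 0 < i → N i = x i + (1 + K0 * z) * (srlkChainSum n K x i + d)

theorem srlkSigma_eq_mul_srlkDelta (z L : ℝ) (x : Fin (n+1) → ℝ) :
    srlkSigma n K0 K z L x = K0 * z * srlkDelta n K L x := by
  rw [srlkSigma, srlkDelta]; ring

theorem srlkChainSum_zero (x : Fin (n+1) → ℝ) :
    srlkChainSum n K x 0
      = x 0 + ∑ j ∈ Finset.Ioi 0, (∏ l ∈ Finset.Iio j, K l * x l) * x j := by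
  rw [srlkChainSum, ← Finset.Ioi_insert, Finset.sum_insert Finset.notMem_Ioi_self,
    Finset.Iio_eq_empty.2 fun b _ => Fin.zero_le b, Finset.prod_empty, one_mul]

theorem srlkSteady_iff_srlkReducedSteady (L z : ℝ) (x : Fin (n+1) → ℝ) :
    srlkSteady n K0 K K Nz N L z x ↔ SRLKReducedSteady n K0 K Nz N z (srlkDelta n K L x) x := by
  have hsum : ∀ i, ∑ j ∈ Finset.Ici i, ((∏ l ∈ Finset.Iio j, K l * x l) * x j
      + K0 * z * (∏ l ∈ Finset.Iio j, K l * x l) * x j) = (1 + K0 * z) * srlkChainSum n K x i :=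
    fun i => by rw [srlkChainSum, Finset.mul_sum]; exact Finset.sum_congr rfl fun j _ => by ring
  simp only [srlkSteady, SRLKReducedSteady, srlkSigma_eq_mul_srlkDelta, ← srlkChainSum_zero, hsum]
  refine and_congr ?_ (and_congr ?_ (forall₂_congr fun i _ => ?_)) <;>
    constructor <;> intro h <;> linear_combination h

@[fun_prop]
theorem continuous_srlkChainSum (i : Fin (n+1)) : Continuous fun x => srlkChainSum n K x i := by
  unfold srlkChainSum; fun_prop

theorem isClosed_setOf_srlkReducedSteady :
    IsClosed {p : ℝ × ℝ × (Fin (n+1) → ℝ) |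
      SRLKReducedSteady n K0 K Nz N p.1 p.2.1 p.2.2} := by
  simp only [SRLKReducedSteady, Set.ofPred_and, Set.ofPred_forall]
  refine IsClosed.inter (isClosed_eq ?_ ?_) (IsClosed.inter (isClosed_eq ?_ ?_)
    (isClosed_iInter fun i => isClosed_iInter fun _ => isClosed_eq ?_ ?_)) <;> fun_prop

theorem srlkChainSum_nonneg {x : Fin (n+1) → ℝ} (hK : ∀ i, 0 ≤ K i) (hx : ∀ i, 0 ≤ x i)
    (i : Fin (n+1)) : 0 ≤ srlkChainSum n K x i :=
  Finset.sum_nonneg fun j _ =>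
    mul_nonneg (Finset.prod_nonneg fun l _ => mul_nonneg (hK l) (hx l)) (hx j)

theorem srlkChainSum_eq_zero_of_eq_zero {x : Fin (n+1) → ℝ} {k : Fin (n+1)} (hk : x k = 0) :
    srlkChainSum n K x k = 0 := by
  refine Finset.sum_eq_zero fun j hj => ?_
  obtain rfl | hkj := (Finset.mem_Ici.1 hj).eq_or_lt
  · rw [hk, mul_zero]
  · rw [Finset.prod_eq_zero (Finset.mem_Iio.2 hkj) (by rw [hk, mul_zero]), zero_mul]

namespace SRLKReducedSteady

variable {z d : ℝ} {x : Fin (n+1) → ℝ}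

theorem mul_le_apply (h : SRLKReducedSteady n K0 K Nz N z d x) (hK0 : 0 ≤ K0)
    (hK : ∀ i, 0 ≤ K i) (hz : 0 ≤ z) (hx : ∀ i, 0 ≤ x i) (i : Fin (n+1)) :
    (1 + K0 * z) * d ≤ N i := by
  have hS := srlkChainSum_nonneg hK hx i
  have hKz : 0 ≤ K0 * z := mul_nonneg hK0 hz
  obtain rfl | hi := eq_or_ne i 0
  · nlinarith [h.2.1]
  · nlinarith [h.2.2 i (Fin.pos_of_ne_zero hi), hx i]

theorem apply_eq_mul_of_eq_zero (h : SRLKReducedSteady n K0 K Nz N z d x) {k : Fin (n+1)}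
    (hk : x k = 0) : N k = (1 + K0 * z) * d := by
  obtain rfl | hk0 := eq_or_ne k 0
  · rw [h.2.1, srlkChainSum_eq_zero_of_eq_zero hk, zero_add]
  · rw [h.2.2 k (Fin.pos_of_ne_zero hk0), srlkChainSum_eq_zero_of_eq_zero hk, hk, zero_add,
      zero_add]

theorem inf'_eq (h : SRLKReducedSteady n K0 K Nz N z d x) (hK0 : 0 ≤ K0) (hK : ∀ i, 0 ≤ K i)
    (hz : 0 ≤ z) (hx : ∀ i, 0 ≤ x i) {k : Fin (n+1)} (hk : x k = 0) :
    Finset.univ.inf' Finset.univ_nonempty N = (1 + K0 * z) * d :=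
  le_antisymm ((Finset.inf'_le N (Finset.mem_univ k)).trans_eq (h.apply_eq_mul_of_eq_zero hk))
    (Finset.le_inf' _ _ fun i _ => h.mul_le_apply hK0 hK hz hx i)

theorem quadratic (h : SRLKReducedSteady n K0 K Nz N z d x) :
    K0 * z ^ 2 + (1 + K0 * (N 0 - Nz)) * z - Nz = 0 := by
  linear_combination (K0 * z) * h.2.1 - (1 + K0 * z) * h.1

end SRLKReducedSteady

end Model

theorem SRLKBranch.continuousOn_srlkDelta {n : ℕ} {K0 : ℝ} {K K' : Fin (n+1) → ℝ} {Nz : ℝ}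
    {N : Fin (n+1) → ℝ} {z : ℝ → ℝ} {x : Fin (n+1) → ℝ → ℝ}
    (hbr : SRLKBranch n K0 K K' Nz N z x) :
    ContinuousOn (fun L => srlkDelta n K' L (fun i => x i L)) (Set.Ioi 0) :=
  continuousOn_id.mul (continuousOn_finsetProd _ fun j _ => continuousOn_const.mul (hbr.contX j))

theorem srlk_no_allostery_sigma_delta_limits_general
    (n : ℕ) (K0 : ℝ) (K K' : Fin (n+1) → ℝ) (Nz : ℝ) (N : Fin (n+1) → ℝ)
    (hK0 : 0 < K0) (hK : ∀ i, 0 < K i)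
    (hNz : 0 < Nz)
    (hna : ∀ i, K i = K' i)
    (z : ℝ → ℝ) (x : Fin (n+1) → ℝ → ℝ)
    (hbr : SRLKBranch n K0 K K' Nz N z x) :
    Filter.Tendsto (fun L => srlkSigma n K0 K (z L) L (fun i => x i L))
      Filter.atTop
      (nhds ((K0 * ((-1 + K0*(Nz - N 0)
            + Real.sqrt ((1 + K0*(N 0 - Nz))^2 + 4*K0*Nz)) / (2*K0))
          / (1 + K0 * ((-1 + K0*(Nz - N 0)
            + Real.sqrt ((1 + K0*(N 0 - Nz))^2 + 4*K0*Nz)) / (2*K0))))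
        * Finset.univ.inf' Finset.univ_nonempty N)) ∧
    Filter.Tendsto (fun L => srlkDelta n K' L (fun i => x i L))
      Filter.atTop
      (nhds (Finset.univ.inf' Finset.univ_nonempty N
        / (1 + K0 * ((-1 + K0*(Nz - N 0)
            + Real.sqrt ((1 + K0*(N 0 - Nz))^2 + 4*K0*Nz)) / (2*K0))))) := by
  obtain rfl : K = K' := funext hna
  have hpos : ∀ᶠ L : ℝ in atTop, 0 < L := eventually_gt_atTop 0
  obtain ⟨ζ, hζ⟩ := hbr.algZ.exists_tendsto hbr.contZ hbr.bddZ
  choose ξ hξ using fun i => (hbr.algX i).exists_tendsto (hbr.contX i) (hbr.bddX i)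
  obtain ⟨d, hd⟩ := hbr.algDelta.exists_tendsto hbr.continuousOn_srlkDelta hbr.bddDelta
  have hζ0 : 0 ≤ ζ := ge_of_tendsto hζ (hpos.mono fun L hL => (hbr.posZ L hL).le)
  have hξ0 i : 0 ≤ ξ i := ge_of_tendsto (hξ i) (hpos.mono fun L hL => (hbr.posX i L hL).le)
  have hlim : SRLKReducedSteady n K0 K Nz N ζ d ξ :=
    isClosed_setOf_srlkReducedSteady.mem_of_tendsto (hζ.prodMk_nhds (hd.prodMk_nhds
      (tendsto_pi_nhds.2 hξ))) (hpos.mono fun L hL =>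
        (srlkSteady_iff_srlkReducedSteady L (z L) _).1 (hbr.steady L hL))
  -- `δ = L · ∏ K_j x_j` stays bounded, so one of the chains is used up
  obtain ⟨k, -, hk⟩ := Finset.prod_eq_zero_iff.1 (eq_zero_of_tendsto_of_tendsto_id_mul
    (tendsto_finsetProd _ fun j _ => tendsto_const_nhds.mul (hξ j)) hd)
  have hmin := hlim.inf'_eq hK0.le (fun i => (hK i).le) hζ0 hξ0
    ((mul_eq_zero.1 hk).resolve_left (hK k).ne')
  have hroot : (-1 + K0 * (Nz - N 0) + √((1 + K0 * (N 0 - Nz)) ^ 2 + 4 * K0 * Nz)) / (2 * K0)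
      = ζ := by
    rw [eq_quadratic_root_of_nonneg hK0 hNz hζ0 hlim.quadratic]; ring
  rw [hroot, hmin]
  have h1 : 0 < 1 + K0 * ζ := by positivity
  refine ⟨?_, by rwa [mul_div_cancel_left₀ _ h1.ne']⟩
  refine (((tendsto_const_nhds.mul hζ).mul hd).congr' (hpos.mono fun L _ =>
    (srlkSigma_eq_mul_srlkDelta _ _ _).symm)).trans_eq ?_
  field_simp

/-- along any SRLK steady-state branch with no allostery
(`K_i = K_i'`), with `N° = min_i N_i` and `z̄` the explicit kinase steady state, the
signalling and dummy functions converge to `(K0·z̄/(1+K0·z̄))·N°` and `N°/(1+K0·z̄)`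
respectively, as `L → +∞`. -/
theorem srlk_no_allostery_sigma_delta_limits
    (n : ℕ) (K0 : ℝ) (K K' : Fin (n+1) → ℝ) (Nz : ℝ) (N : Fin (n+1) → ℝ)
    (hK0 : 0 < K0) (hK : ∀ i, 0 < K i) (hK' : ∀ i, 0 < K' i)
    (hNz : 0 < Nz) (hN : ∀ i, 0 < N i)
    (hna : ∀ i, K i = K' i)
    (z : ℝ → ℝ) (x : Fin (n+1) → ℝ → ℝ)
    (hbr : SRLKBranch n K0 K K' Nz N z x) :
    Filter.Tendsto (fun L => srlkSigma n K0 K (z L) L (fun i => x i L))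
      Filter.atTop
      (nhds ((K0 * ((-1 + K0*(Nz - N 0)
            + Real.sqrt ((1 + K0*(N 0 - Nz))^2 + 4*K0*Nz)) / (2*K0))
          / (1 + K0 * ((-1 + K0*(Nz - N 0)
            + Real.sqrt ((1 + K0*(N 0 - Nz))^2 + 4*K0*Nz)) / (2*K0))))
        * Finset.univ.inf' Finset.univ_nonempty N)) ∧
    Filter.Tendsto (fun L => srlkDelta n K' L (fun i => x i L))
      Filter.atTop
      (nhds (Finset.univ.inf' Finset.univ_nonempty N
        / (1 + K0 * ((-1 + K0*(Nz - N 0)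
            + Real.sqrt ((1 + K0*(N 0 - Nz))^2 + 4*K0*Nz)) / (2*K0))))) :=
  srlk_no_allostery_sigma_delta_limits_general n K0 K K' Nz N hK0 hK hNz hna z x hbr
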